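/- arXiv:1404.6769 — 4 statements merged into one kernel-verified Lean document; each statement's English description precedes it below -/
import Mathlib

section
/- Let a > 0 and let P be a probability distribution supported on [-a, a]. Then ∫ exp(-x²) dP(x) ≤ exp( -(∫ x dP(x))² + (a² - 1/2)₊ ), where (y)₊ = max(y, 0). -/
open MeasureTheory ProbabilityTheory Real Set

/-! Let `m = ∫ x dP` and `κ = e^{1-a²} (e^{(a²-1/2)₊} - 1)`. On `[-a, a]` the second derivative
`(4x² - 2) e^{-x²}` of `e^{-x²}` is at most `2κ`, so `e^{-x²} - κx²` is concave there and Jensen's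
inequality gives `∫ e^{-x²} dP ≤ e^{-m²} + κ Var P`. By Bhatia–Davis, `Var P ≤ a² - m²`, and
`e w ≤ e^w` with `w = a² - m²` turns `e^{-m²} + κ (a² - m²)` into at most `e^{-m² + (a²-1/2)₊}`. -/

theorem ConcaveOn.integral_le_add_mul_variance {μ : Measure ℝ} [IsProbabilityMeasure μ]
    {l u κ : ℝ} {g : ℝ → ℝ} (hμ : ∀ᵐ x ∂μ, x ∈ Icc l u) (hg : Continuous g)
    (hconc : ConcaveOn ℝ (Icc l u) fun x ↦ g x - κ * x ^ 2) :
    ∫ x, g x ∂μ ≤ g (∫ x, x ∂μ) + κ * variance id μ := by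
  have hrestrict : μ.restrict (Icc l u) = μ := Measure.restrict_eq_self_of_ae_mem hμ
  have hint : ∀ {f : ℝ → ℝ}, Continuous f → Integrable f μ := fun hf ↦
    hrestrict ▸ hf.integrableOn_Icc
  have hsq : Integrable (fun x ↦ κ * x ^ 2) μ := hint (by fun_prop)
  have hjensen := hconc.le_map_integral (hg.sub (by fun_prop)).continuousOn isClosed_Icc hμ
    (hint continuous_id) ((hint hg).sub hsq)
  rw [integral_sub (hint hg) hsq, integral_const_mul] at hjensen
  rw [variance_eq_sub (X := id) (memLp_of_bounded hμ aestronglyMeasurable_id 2)]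
  simp only [id, Pi.pow_apply] at hjensen ⊢
  linarith

theorem concaveOn_sub_mul_sq_of_hasDerivAt2_le {D : Set ℝ} (hD : Convex ℝ D)
    {f f' f'' : ℝ → ℝ} {κ : ℝ} (hf : ∀ x, HasDerivAt f (f' x) x)
    (hf' : ∀ x, HasDerivAt f' (f'' x) x) (hf'' : ∀ x ∈ D, f'' x ≤ 2 * κ) :
    ConcaveOn ℝ D fun x ↦ f x - κ * x ^ 2 := by
  have hsq (x : ℝ) : HasDerivAt (fun x ↦ κ * x ^ 2) (2 * κ * x) x := by
    simpa [mul_comm, mul_left_comm] using (hasDerivAt_pow 2 x).const_mul κ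
  refine concaveOn_of_hasDerivWithinAt2_nonpos hD (f' := fun x ↦ f' x - 2 * κ * x)
    (f'' := fun x ↦ f'' x - 2 * κ)
    (fun x _ ↦ ((hf x).sub (hsq x)).continuousAt.continuousWithinAt)
    (fun x _ ↦ ((hf x).sub (hsq x)).hasDerivWithinAt)
    (fun x _ ↦ by
      simpa only [mul_one] using
        ((hf' x).fun_sub ((hasDerivAt_id' x).const_mul (2 * κ))).hasDerivWithinAt)
    (fun x hx ↦ sub_nonpos.2 (hf'' x (interior_subset hx)))

theorem exp_neg_add_mul_sub_le_exp {A c : ℝ} (hc : 0 ≤ c) (s : ℝ) :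
    exp (-s) + exp (1 - A) * (exp c - 1) * (A - s) ≤ exp (-s + c) := by
  have hlin : exp (1 - A) * (A - s) ≤ exp (-s) := by
    calc exp (1 - A) * (A - s) ≤ exp (1 - A) * exp (A - s - 1) := by
          gcongr; linarith [add_one_le_exp (A - s - 1)]
      _ = exp (-s) := by rw [← exp_add]; ring_nf
  have hc1 : 0 ≤ exp c - 1 := by linarith [one_le_exp hc]
  calc exp (-s) + exp (1 - A) * (exp c - 1) * (A - s)
      ≤ exp (-s) + exp (-s) * (exp c - 1) := by nlinarith
    _ = exp (-s + c) := by rw [exp_add]; ring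

theorem four_mul_sub_two_mul_exp_neg_le {u A : ℝ} (hu : u ≤ A) :
    (4 * u - 2) * exp (-u) ≤ 2 * (exp (1 - A) * (exp (max (A - 1 / 2) 0) - 1)) := by
  rcases le_or_gt u (1 / 2) with hu' | hu'
  · have hc : 1 ≤ exp (max (A - 1 / 2) 0) := one_le_exp (le_max_right _ _)
    have hlhs : (4 * u - 2) * exp (-u) ≤ 0 :=
      mul_nonpos_of_nonpos_of_nonneg (by linarith) (exp_pos _).le
    have hrhs : 0 ≤ exp (1 - A) * (exp (max (A - 1 / 2) 0) - 1) :=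
      mul_nonneg (exp_pos _).le (by linarith)
    linarith
  · have hw : u - 1 / 2 ≤ exp (u - 1 / 2) - 1 := by linarith [add_one_le_exp (u - 1 / 2)]
    have he : 2 ≤ exp 1 := by linarith [add_one_le_exp (1 : ℝ)]
    rw [max_eq_left (by linarith)]
    calc (4 * u - 2) * exp (-u) = 2 * 2 * ((u - 1 / 2) * exp (-u)) := by ring
      _ ≤ 2 * exp 1 * ((exp (u - 1 / 2) - 1) * exp (-u)) := by
          gcongr 2 * ?_ * (?_ * _)
      _ = 2 * (exp (1 / 2) - exp (1 - u)) := by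
          rw [show exp (1 / 2) = exp 1 * exp (u - 1 / 2) * exp (-u) by
              rw [← exp_add, ← exp_add]; ring_nf,
            show exp (1 - u) = exp 1 * exp (-u) by rw [← exp_add]; ring_nf]
          ring
      _ ≤ 2 * (exp (1 / 2) - exp (1 - A)) := by gcongr
      _ = 2 * (exp (1 - A) * (exp (A - 1 / 2) - 1)) := by
          simp only [mul_sub, ← exp_add]; ring_nf

theorem hasDerivAt_exp_neg_sq (x : ℝ) :
    HasDerivAt (fun x ↦ exp (-x ^ 2)) (-2 * x * exp (-x ^ 2)) x := by
  simpa [mul_comm] using ((hasDerivAt_pow 2 x).neg).exp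

theorem hasDerivAt_deriv_exp_neg_sq (x : ℝ) :
    HasDerivAt (fun x ↦ -2 * x * exp (-x ^ 2)) ((4 * x ^ 2 - 2) * exp (-x ^ 2)) x := by
  refine (((hasDerivAt_id' x).const_mul (-2)).fun_mul (hasDerivAt_exp_neg_sq x)).congr_deriv ?_
  ring

theorem integral_exp_neg_sq_le_general (a : ℝ) (P : Measure ℝ)
    [IsProbabilityMeasure P] (hsupp : P (Set.Icc (-a) a) = 1) :
    ∫ x, Real.exp (-x ^ 2) ∂P ≤
      Real.exp (-(∫ x, x ∂P) ^ 2 + max (a ^ 2 - 1 / 2) 0) := by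
  have hP : ∀ᵐ x ∂P, x ∈ Icc (-a) a := by
    rwa [ae_mem_iff_measure_eq measurableSet_Icc.nullMeasurableSet, measure_univ]
  set m := ∫ x, x ∂P
  set κ := Real.exp (1 - a ^ 2) * (Real.exp (max (a ^ 2 - 1 / 2) 0) - 1)
  have hconc : ConcaveOn ℝ (Icc (-a) a) fun x ↦ Real.exp (-x ^ 2) - κ * x ^ 2 :=
    concaveOn_sub_mul_sq_of_hasDerivAt2_le (convex_Icc _ _) hasDerivAt_exp_neg_sq
      hasDerivAt_deriv_exp_neg_sq fun x hx ↦
        four_mul_sub_two_mul_exp_neg_le (sq_le_sq' hx.1 hx.2)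
  have hvar : variance id P ≤ a ^ 2 - m ^ 2 := by
    have : variance id P ≤ (a - m) * (m - -a) := variance_le_sub_mul_sub hP aemeasurable_id
    linarith
  have hκ : 0 ≤ κ := mul_nonneg (exp_pos _).le (sub_nonneg.2 (one_le_exp (le_max_right _ _)))
  calc ∫ x, Real.exp (-x ^ 2) ∂P
      ≤ Real.exp (-m ^ 2) + κ * variance id P :=
        hconc.integral_le_add_mul_variance hP (by fun_prop)
    _ ≤ Real.exp (-m ^ 2) + κ * (a ^ 2 - m ^ 2) := by gcongr
    _ ≤ _ :=
        exp_neg_add_mul_sub_le_exp (A := a ^ 2) (le_max_right _ 0) (m ^ 2)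

/-- Let `a > 0` and `P` a Borel probability measure on `ℝ` supported on `[-a, a]`.
Then `∫ exp(-x²) dP ≤ exp(-(∫ x dP)² + (a² - 1/2)₊)`. -/
theorem integral_exp_neg_sq_le (a : ℝ) (ha : 0 < a) (P : Measure ℝ)
    [IsProbabilityMeasure P] (hsupp : P (Set.Icc (-a) a) = 1) :
    ∫ x, Real.exp (-x ^ 2) ∂P ≤
      Real.exp (-(∫ x, x ∂P) ^ 2 + max (a ^ 2 - 1 / 2) 0) :=
  integral_exp_neg_sq_le_general a P hsupp
end

section
/- Let P be a probability measure supported on [-a, a] with a > 2^{-1/2}, and let ω(x) = min(2^{-1/2}, max(x, -2^{-1/2})). Then (∫ x dP(x))² - (∫ ω(x) dP(x))² ≤ a² - 1/2. -/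
open MeasureTheory

/-- Let `P` be a Borel probability measure supported on `[-a, a]` with `a > 2^{-1/2}`,
and let `ω` be the clamp onto `[-2^{-1/2}, 2^{-1/2}]`. Then
`(∫ x dP)² - (∫ ω(x) dP)² ≤ a² - 1/2`. -/
theorem sq_integral_sub_sq_integral_clamp_le (a : ℝ) (ha : (Real.sqrt 2)⁻¹ < a)
    (P : Measure ℝ) [IsProbabilityMeasure P] (hsupp : P (Set.Icc (-a) a) = 1) :
    (∫ x, x ∂P) ^ 2 -
        (∫ x, min ((Real.sqrt 2)⁻¹) (max x (-(Real.sqrt 2)⁻¹)) ∂P) ^ 2 ≤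
      a ^ 2 - 1 / 2 := by
  set c : ℝ := (Real.sqrt 2)⁻¹ with hc_def
  have hc : 0 < c := by positivity
  have hc2 : c ^ 2 = 1 / 2 := by
    rw [hc_def, inv_pow, Real.sq_sqrt (by norm_num : (2:ℝ) ≥ 0)]
    norm_num
  have hae : ∀ᵐ x ∂P, x ∈ Set.Icc (-a) a := by
    rw [ae_iff]
    have : {x | x ∉ Set.Icc (-a) a} = (Set.Icc (-a) a)ᶜ := rfl
    rw [this, measure_compl measurableSet_Icc (measure_ne_top _ _), hsupp, measure_univ]
    simp
  have hωb : ∀ x : ℝ, |min c (max x (-c))| ≤ c := by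
    intro x
    rw [abs_le]
    exact ⟨le_min (by linarith) (le_max_right _ _), min_le_left _ _⟩
  have key : ∀ x ∈ Set.Icc (-a) a, |x - min c (max x (-c))| ≤ a - c := by
    rintro x ⟨h1, h2⟩
    rcases le_total x (-c) with h | h
    · rw [max_eq_right h, min_eq_right (by linarith), abs_le]
      constructor <;> linarith
    · rcases le_total c x with h' | h'
      · rw [max_eq_left (by linarith), min_eq_left h', abs_le]
        constructor <;> linarith
      · rw [max_eq_left (by linarith), min_eq_right h']
        simp only [sub_self, abs_zero]
        linarith
  have hmeasω : Measurable fun x : ℝ => min c (max x (-c)) :=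
    measurable_const.min (measurable_id.max measurable_const)
  have hint_id : Integrable (fun x : ℝ => x) P := by
    apply Integrable.mono' (integrable_const a) measurable_id.aestronglyMeasurable
    filter_upwards [hae] with x hx
    rw [Real.norm_eq_abs, abs_le]
    exact ⟨hx.1, hx.2⟩
  have hint_ω : Integrable (fun x : ℝ => min c (max x (-c))) P := by
    apply Integrable.mono' (integrable_const c) hmeasω.aestronglyMeasurable
    exact Filter.Eventually.of_forall fun x => (Real.norm_eq_abs _).le.trans (by
      simpa using hωb x)
  have hconst : ∀ b : ℝ, (∫ _ : ℝ, b ∂P) = b := by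
    intro b; simp
  have hb1 : |∫ x, (x - min c (max x (-c))) ∂P| ≤ a - c := by
    rw [← Real.norm_eq_abs]
    calc ‖∫ x, (x - min c (max x (-c))) ∂P‖ ≤ ∫ _ : ℝ, (a - c) ∂P := by
          apply norm_integral_le_of_norm_le (integrable_const _)
          filter_upwards [hae] with x hx
          rw [Real.norm_eq_abs]
          exact key x hx
      _ = a - c := hconst _
  have hb2 : |∫ x, x ∂P| ≤ a := by
    rw [← Real.norm_eq_abs]
    calc ‖∫ x, x ∂P‖ ≤ ∫ _ : ℝ, a ∂P := by
          apply norm_integral_le_of_norm_le (integrable_const _)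
          filter_upwards [hae] with x hx
          rw [Real.norm_eq_abs, abs_le]; exact ⟨hx.1, hx.2⟩
      _ = a := hconst _
  have hb3 : |∫ x, min c (max x (-c)) ∂P| ≤ c := by
    rw [← Real.norm_eq_abs]
    calc ‖∫ x, min c (max x (-c)) ∂P‖ ≤ ∫ _ : ℝ, c ∂P := by
          apply norm_integral_le_of_norm_le (integrable_const _)
          exact Filter.Eventually.of_forall fun x => (Real.norm_eq_abs _).le.trans_eq rfl |>.trans (hωb x)
      _ = c := hconst _
  have hdiff : (∫ x, (x - min c (max x (-c))) ∂P) = (∫ x, x ∂P) - ∫ x, min c (max x (-c)) ∂P :=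
    integral_sub hint_id hint_ω
  set m := ∫ x, x ∂P
  set w := ∫ x, min c (max x (-c)) ∂P
  rw [hdiff] at hb1
  rw [abs_le] at hb1 hb2 hb3
  nlinarith [hb1.1, hb1.2, hb2.1, hb2.2, hb3.1, hb3.2,
    mul_nonneg (by linarith [hb1.2] : (0:ℝ) ≤ (a - c) - (m - w)) (by linarith [hb2.1, hb3.2] : (0:ℝ) ≤ (a + c) + (m + w)),
    mul_nonneg (by linarith [hb1.1] : (0:ℝ) ≤ (a - c) + (m - w)) (by linarith [hb2.2, hb3.1] : (0:ℝ) ≤ (a + c) - (m + w))]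
end

section
/- Let (x_t)_{1≤t≤T} be a real sequence and {(x̂_t^{(i)})_{1≤t≤T} : 1 ≤ i ≤ N} a collection of predicting sequences. Define aggregation weights by α̂_{i,t} = exp(-η Σ_{s<t} (x̂_s^{(i)} - x_s)²) / Σ_k exp(-η Σ_{s<t} (x̂_s^{(k)} - x_s)²) and the aggregated predictor x̂_t = Σ_i α̂_{i,t} x̂_t^{(i)}. Then for any η > 0: (1/T) Σ_{t=1}^T (x̂_t - x_t)² ≤ min_{1≤i≤N} (1/T) Σ_{t=1}^T (x̂_t^{(i)} - x_t)² + (log N)/(Tη) + (1/T) Σ_{t=1}^T (y_t² - 1/(2η))₊, where y_t = |x_t| + max_{1≤i≤N} |x̂_t^{(i)}|. -/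
/-!
The normalising constant `Z t = ∑ₖ exp(-η Lₖ(t))` of the exponential weights (`Lₖ(t)` the
cumulative loss of expert `k` before time `t`) equals `N` at `t = 0`, dominates `exp(-η Lᵢ(T))`
for every `i`, and is multiplied at each round by the mixture `∑ᵢ wᵢ(t) exp(-η ℓᵢ(t))` of the
experts' factors. Since `u ↦ exp(-l u²)` is concave on `[-a, a]` whenever `2 l a² ≤ 1`, Jensen's
inequality bounds this mixture by the factor `exp(-η ℓ̂(t))` of the aggregated prediction, at the
price `η (a² - 1/(2η))₊` of lowering `η` to an admissible `l`. Taking logarithms in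
`exp(-η Lᵢ(T)) ≤ Z T ≤ N ∏ₜ exp(-η ℓ̂(t) + price)` gives the bound.
-/

open Finset Real

section ExpConcavity

theorem concaveOn_exp_neg_mul_sq {l a : ℝ} (hl : 0 ≤ l) (hla : 2 * l * a ^ 2 ≤ 1) :
    ConcaveOn ℝ (Set.Icc (-a) a) (fun u => exp (-l * u ^ 2)) := by
  have hf' : ∀ u : ℝ, HasDerivAt (fun u => exp (-l * u ^ 2)) (-2 * l * u * exp (-l * u ^ 2)) u :=
    fun u => ((hasDerivAt_pow 2 u).const_mul (-l)).exp.congr_deriv (by push_cast; ring)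
  have hf'' : ∀ u : ℝ, HasDerivAt (fun u => -2 * l * u * exp (-l * u ^ 2))
      ((4 * l ^ 2 * u ^ 2 - 2 * l) * exp (-l * u ^ 2)) u :=
    fun u => (((hasDerivAt_id u).const_mul (-2 * l)).mul (hf' u)).congr_deriv
      (by simp only [id]; ring)
  refine concaveOn_of_hasDerivWithinAt2_nonpos (convex_Icc _ _)
    (fun u _ => (hf' u).continuousAt.continuousWithinAt)
    (fun u _ => (hf' u).hasDerivWithinAt) (fun u _ => (hf'' u).hasDerivWithinAt) ?_
  intro u hu
  rw [interior_Icc] at hu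
  have hu2 : u ^ 2 ≤ a ^ 2 := sq_le_sq' hu.1.le hu.2.le
  exact mul_nonpos_of_nonpos_of_nonneg (by nlinarith) (exp_nonneg _)

variable {ι : Type*} (s : Finset ι) {w u : ι → ℝ} {η a : ℝ}

theorem sum_mul_exp_neg_mul_sq_le_of_le {l : ℝ} (hw0 : ∀ i ∈ s, 0 ≤ w i)
    (hw1 : ∑ i ∈ s, w i = 1) (hu : ∀ i ∈ s, |u i| ≤ a) (hl : 0 ≤ l) (hlη : l ≤ η)
    (hla : 2 * l * a ^ 2 ≤ 1) :
    ∑ i ∈ s, w i * exp (-η * u i ^ 2) ≤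
      exp (-η * (∑ i ∈ s, w i * u i) ^ 2 + (η - l) * a ^ 2) := by
  set m := ∑ i ∈ s, w i * u i
  have hm : |m| ≤ a :=
    calc |m| ≤ ∑ i ∈ s, w i * |u i| := by
          refine (abs_sum_le_sum_abs _ _).trans_eq (sum_congr rfl fun i hi => ?_)
          rw [abs_mul, abs_of_nonneg (hw0 i hi)]
      _ ≤ ∑ i ∈ s, w i * a :=
          sum_le_sum fun i hi => mul_le_mul_of_nonneg_left (hu i hi) (hw0 i hi)
      _ = a := by rw [← sum_mul, hw1, one_mul]
  have hm2 : m ^ 2 ≤ a ^ 2 := sq_le_sq' (neg_le_of_abs_le hm) (le_of_abs_le hm)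
  have jensen : ∑ i ∈ s, w i * exp (-l * u i ^ 2) ≤ exp (-l * m ^ 2) := by
    simpa only [smul_eq_mul] using (concaveOn_exp_neg_mul_sq hl hla).le_map_sum hw0 hw1
      fun i hi => Set.mem_Icc.mpr (abs_le.mp (hu i hi))
  calc ∑ i ∈ s, w i * exp (-η * u i ^ 2) ≤ ∑ i ∈ s, w i * exp (-l * u i ^ 2) :=
        sum_le_sum fun i hi => mul_le_mul_of_nonneg_left
          (exp_le_exp.mpr (by nlinarith [sq_nonneg (u i)])) (hw0 i hi)
    _ ≤ exp (-l * m ^ 2) := jensen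
    _ ≤ exp (-η * m ^ 2 + (η - l) * a ^ 2) := exp_le_exp.mpr (by nlinarith)

theorem sum_mul_exp_neg_mul_sq_le (hη : 0 < η) (hw0 : ∀ i ∈ s, 0 ≤ w i)
    (hw1 : ∑ i ∈ s, w i = 1) (hu : ∀ i ∈ s, |u i| ≤ a) :
    ∑ i ∈ s, w i * exp (-η * u i ^ 2) ≤
      exp (-η * (∑ i ∈ s, w i * u i) ^ 2 + η * max (a ^ 2 - 1 / (2 * η)) 0) := by
  have hprice : 0 ≤ η * max (a ^ 2 - 1 / (2 * η)) 0 := mul_nonneg hη.le (le_max_right _ _)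
  by_cases hsmall : 2 * η * a ^ 2 ≤ 1
  · refine (sum_mul_exp_neg_mul_sq_le_of_le s hw0 hw1 hu hη.le le_rfl hsmall).trans ?_
    exact exp_le_exp.mpr (by simpa using hprice)
  · have ha : a ≠ 0 := by rintro rfl; simp at hsmall
    have hl : 1 / (2 * a ^ 2) ≤ η := by
      rw [div_le_iff₀ (by positivity)]; linarith
    refine (sum_mul_exp_neg_mul_sq_le_of_le s hw0 hw1 hu (by positivity) hl
      (le_of_eq (by field_simp))).trans (exp_le_exp.mpr ?_)
    have : (η - 1 / (2 * a ^ 2)) * a ^ 2 = η * (a ^ 2 - 1 / (2 * η)) := by field_simp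
    nlinarith [le_max_left (a ^ 2 - 1 / (2 * η)) 0]

end ExpConcavity

section ExponentialWeights

variable {ι : Type*} [Fintype ι] (η : ℝ) (ℓ : ι → ℕ → ℝ)

noncomputable def expPotential (t : ℕ) : ℝ :=
  ∑ k, exp (-η * ∑ s ∈ range t, ℓ k s)

noncomputable def expWeight (i : ι) (t : ℕ) : ℝ :=
  exp (-η * ∑ s ∈ range t, ℓ i s) / expPotential η ℓ t

theorem expPotential_zero : expPotential η ℓ 0 = Fintype.card ι := by
  simp [expPotential]

theorem expPotential_pos [Nonempty ι] (t : ℕ) : 0 < expPotential η ℓ t :=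
  sum_pos (fun _ _ => exp_pos _) univ_nonempty

theorem exp_neg_mul_sum_le_expPotential (i : ι) (t : ℕ) :
    exp (-η * ∑ s ∈ range t, ℓ i s) ≤ expPotential η ℓ t :=
  single_le_sum (f := fun k => exp (-η * ∑ s ∈ range t, ℓ k s)) (fun _ _ => (exp_pos _).le)
    (mem_univ i)

theorem expWeight_nonneg (i : ι) (t : ℕ) : 0 ≤ expWeight η ℓ i t :=
  div_nonneg (exp_pos _).le (sum_nonneg fun _ _ => (exp_pos _).le)

theorem sum_expWeight [Nonempty ι] (t : ℕ) : ∑ i, expWeight η ℓ i t = 1 := by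
  simp only [expWeight, ← sum_div]
  exact div_self (expPotential_pos η ℓ t).ne'

theorem expPotential_succ [Nonempty ι] (t : ℕ) :
    expPotential η ℓ (t + 1) =
      expPotential η ℓ t * ∑ i, expWeight η ℓ i t * exp (-η * ℓ i t) := by
  rw [expPotential, mul_sum]
  refine sum_congr rfl fun i _ => ?_
  rw [expWeight, ← mul_assoc, mul_div_cancel₀ _ (expPotential_pos η ℓ t).ne',
    sum_range_succ, mul_add, exp_add]

theorem sum_le_sum_add_log_card_div_add_sum [Nonempty ι] (hη : 0 < η) {ℓhat δ : ℕ → ℝ}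
    (hround : ∀ t, ∑ i, expWeight η ℓ i t * exp (-η * ℓ i t) ≤ exp (-η * ℓhat t + η * δ t))
    (i : ι) (T : ℕ) :
    ∑ t ∈ range T, ℓhat t ≤
      ∑ t ∈ range T, ℓ i t + log (Fintype.card ι) / η + ∑ t ∈ range T, δ t := by
  have hupper : ∀ T, expPotential η ℓ T ≤
      Fintype.card ι * exp (∑ t ∈ range T, (-η * ℓhat t + η * δ t)) := by
    intro T
    induction T with
    | zero => simp [expPotential_zero]
    | succ T ih =>
      rw [expPotential_succ, sum_range_succ, exp_add, ← mul_assoc]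
      exact mul_le_mul ih (hround T)
        (sum_nonneg fun i _ => mul_nonneg (expWeight_nonneg η ℓ i T) (exp_pos _).le)
        (by positivity)
  have hlog := log_le_log (exp_pos _)
    ((exp_neg_mul_sum_le_expPotential η ℓ i T).trans (hupper T))
  rw [log_mul (by simp) (exp_pos _).ne', log_exp, log_exp, sum_add_distrib, ← mul_sum,
    ← mul_sum] at hlog
  refine le_of_mul_le_mul_left ?_ hη
  rw [mul_add, mul_add, mul_div_cancel₀ _ hη.ne']
  linarith

end ExponentialWeights

theorem aggregation_quadratic_loss_oracle_general
    (N T : ℕ) (hN : 0 < N) (η : ℝ) (hη : 0 < η)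
    (x : ℕ → ℝ) (xh : Fin N → ℕ → ℝ)
    (w : Fin N → ℕ → ℝ)
    (hw : ∀ i t, w i t =
      Real.exp (-η * ∑ s ∈ range t, (xh i s - x s) ^ 2) /
        ∑ k : Fin N, Real.exp (-η * ∑ s ∈ range t, (xh k s - x s) ^ 2))
    (agg : ℕ → ℝ) (hagg : ∀ t, agg t = ∑ i : Fin N, w i t * xh i t)
    (y : ℕ → ℝ) (hy : ∀ t, y t = |x t| + ⨆ i : Fin N, |xh i t|) :
    (1 / T) * ∑ t ∈ range T, (agg t - x t) ^ 2 ≤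
      (⨅ i : Fin N, (1 / T) * ∑ t ∈ range T, (xh i t - x t) ^ 2) +
        Real.log N / (T * η) +
        (1 / T) * ∑ t ∈ range T, max ((y t) ^ 2 - 1 / (2 * η)) 0 := by
  have : Nonempty (Fin N) := Fin.pos_iff_nonempty.mp hN
  set ℓ : Fin N → ℕ → ℝ := fun i t => (xh i t - x t) ^ 2
  obtain rfl : w = expWeight η ℓ := funext₂ hw
  have hround (t : ℕ) : ∑ i, expWeight η ℓ i t * exp (-η * ℓ i t) ≤
      exp (-η * (agg t - x t) ^ 2 + η * max (y t ^ 2 - 1 / (2 * η)) 0) := by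
    have hmean : ∑ i, expWeight η ℓ i t * (xh i t - x t) = agg t - x t := by
      simp only [mul_sub, sum_sub_distrib, ← sum_mul, sum_expWeight, one_mul, hagg]
    have hdev (i : Fin N) (_ : i ∈ univ) : |xh i t - x t| ≤ y t :=
      (abs_sub _ _).trans <| by
        linarith [hy t, le_ciSup (Finite.bddAbove_range fun j => |xh j t|) i]
    simpa only [hmean] using sum_mul_exp_neg_mul_sq_le univ hη
      (fun i _ => expWeight_nonneg η ℓ i t) (sum_expWeight η ℓ t) hdev
  obtain ⟨i, hi⟩ := exists_eq_ciInf_of_finite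
    (f := fun i : Fin N => (1 / T : ℝ) * ∑ t ∈ range T, (xh i t - x t) ^ 2)
  have hregret := sum_le_sum_add_log_card_div_add_sum η ℓ hη hround i T
  rw [Fintype.card_fin] at hregret
  rw [← hi]
  calc (1 / T : ℝ) * ∑ t ∈ range T, (agg t - x t) ^ 2
      ≤ (1 / T) * (∑ t ∈ range T, ℓ i t + log N / η +
          ∑ t ∈ range T, max (y t ^ 2 - 1 / (2 * η)) 0) := by gcongr
    _ = _ := by ring

/-- Oracle inequality for exponentially weighted aggregation with the quadratic loss:
for real observations `x 1, …, x T` (indexed here by `t ∈ {0, …, T-1}`, time `t`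
standing for `t+1`) and predictors `xh i`, with weights
`w i t ∝ exp(-η ∑_{s<t} (xh i s - x s)²)` and aggregated predictor
`agg t = ∑ i, w i t * xh i t`, we have
`(1/T) ∑_t (agg t - x t)² ≤ min_i (1/T) ∑_t (xh i t - x t)² + log N/(Tη)
  + (1/T) ∑_t (y t² - 1/(2η))₊` where `y t = |x t| + max_i |xh i t|`. -/
theorem aggregation_quadratic_loss_oracle
    (N T : ℕ) (hN : 0 < N) (hT : 0 < T) (η : ℝ) (hη : 0 < η)
    (x : ℕ → ℝ) (xh : Fin N → ℕ → ℝ)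
    (w : Fin N → ℕ → ℝ)
    (hw : ∀ i t, w i t =
      Real.exp (-η * ∑ s ∈ range t, (xh i s - x s) ^ 2) /
        ∑ k : Fin N, Real.exp (-η * ∑ s ∈ range t, (xh k s - x s) ^ 2))
    (agg : ℕ → ℝ) (hagg : ∀ t, agg t = ∑ i : Fin N, w i t * xh i t)
    (y : ℕ → ℝ) (hy : ∀ t, y t = |x t| + ⨆ i : Fin N, |xh i t|) :
    (1 / T) * ∑ t ∈ range T, (agg t - x t) ^ 2 ≤
      (⨅ i : Fin N, (1 / T) * ∑ t ∈ range T, (xh i t - x t) ^ 2) +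
        Real.log N / (T * η) +
        (1 / T) * ∑ t ∈ range T, max ((y t) ^ 2 - 1 / (2 * η)) 0 :=
  aggregation_quadratic_loss_oracle_general N T hN η hη x xh w hw agg hagg y hy
end

section
/- With the exponentially weighted aggregation weights α̂_{i,t} = exp(-η Σ_{s<t}(x̂_s^{(i)}-x_s)²)/Σ_k exp(-η Σ_{s<t}(x̂_s^{(k)}-x_s)²), for each t the inequality (x̂_t - x_t)² ≤ -(1/η) log( Σ_{i=1}^N α̂_{i,t} exp(-η(x̂_t^{(i)} - x_t)²) ) + (y_t² - 1/(2η))₊ holds, where x̂_t = Σ_i α̂_{i,t} x̂_t^{(i)} and y_t = |x_t| + max_i |x̂_t^{(i)}|. -/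
/-!
The aggregated residual is the mean of the individual residuals under the weights, so everything
reduces to a Jensen-type bound for `v ↦ exp (-η v²)`. This map is concave only on
`|v| ≤ (2η)^{-1/2}`; when the residuals are larger, we lower the exponent to
`μ = 1/(2b²)`, where it is concave on all of `[-b, b]`, and pay for that with the gap
`(η - μ) b² = η b² - 1/2`.
-/

open Finset Real

lemma concaveOn_exp_neg_mul_sq_s9 {μ b : ℝ} (hμ : 0 ≤ μ) (hb : 2 * μ * b ^ 2 ≤ 1) :
    ConcaveOn ℝ (Set.Icc (-b) b) (fun v => exp (-μ * v ^ 2)) := by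
  have hd1 : ∀ v : ℝ, HasDerivAt (fun v => exp (-μ * v ^ 2))
      (exp (-μ * v ^ 2) * (-μ * (2 * v))) v := fun v => by
    simpa using (((hasDerivAt_pow 2 v).const_mul (-μ)).exp)
  have hderiv : deriv (fun v => exp (-μ * v ^ 2)) = fun v => exp (-μ * v ^ 2) * (-μ * (2 * v)) :=
    funext fun v => (hd1 v).deriv
  have hd2 : ∀ v : ℝ, HasDerivAt (fun v => exp (-μ * v ^ 2) * (-μ * (2 * v)))
      (exp (-μ * v ^ 2) * (4 * μ ^ 2 * v ^ 2 - 2 * μ)) v := fun v => by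
    have h2 : HasDerivAt (fun v : ℝ => -μ * (2 * v)) (-μ * 2) v := by
      simpa using ((hasDerivAt_id v).const_mul (2 : ℝ)).const_mul (-μ)
    exact ((hd1 v).mul h2).congr_deriv (by ring)
  refine concaveOn_of_deriv2_nonpos' (convex_Icc _ _)
    (fun v _ => (hd1 v).differentiableAt.differentiableWithinAt)
    (by rw [hderiv]; exact fun v _ => (hd2 v).differentiableAt.differentiableWithinAt)
    fun v hv => ?_
  have hv2 : v ^ 2 ≤ b ^ 2 := sq_le_sq' hv.1 hv.2
  rw [Function.iterate_succ, Function.iterate_one, Function.comp_apply, hderiv, (hd2 v).deriv]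
  exact mul_nonpos_of_nonneg_of_nonpos (exp_pos _).le
    (by nlinarith [mul_le_mul_of_nonneg_left hv2 hμ])

lemma exists_exponent_le_with_sq_gap {η : ℝ} (hη : 0 ≤ η) (b : ℝ) :
    ∃ μ, 0 ≤ μ ∧ μ ≤ η ∧ 2 * μ * b ^ 2 ≤ 1 ∧ (η - μ) * b ^ 2 ≤ max (η * b ^ 2 - 1 / 2) 0 := by
  by_cases hsmall : 2 * η * b ^ 2 ≤ 1
  · exact ⟨η, hη, le_rfl, hsmall, by simp⟩
  · push Not at hsmall
    have hb : b ≠ 0 := by rintro rfl; norm_num at hsmall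
    refine ⟨1 / (2 * b ^ 2), by positivity, ?_, le_of_eq (by field_simp), ?_⟩
    · rw [div_le_iff₀ (by positivity)]; linarith
    · exact le_max_of_le_left (le_of_eq (by field_simp))

/-- The finite form of `∫ exp (-η v²) dP ≤ exp (-η (∫ v dP)² + (η b² - 1/2)₊)` for a probability
measure `P` supported in `[-b, b]`. -/
lemma sum_mul_exp_neg_mul_sq_le_s9 {ι : Type*} (s : Finset ι) {α v : ι → ℝ} {η b : ℝ}
    (hη : 0 ≤ η) (hα : ∀ i ∈ s, 0 ≤ α i) (hα_sum : ∑ i ∈ s, α i = 1)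
    (hv : ∀ i ∈ s, |v i| ≤ b) :
    ∑ i ∈ s, α i * exp (-η * v i ^ 2) ≤
      exp (-η * (∑ i ∈ s, α i * v i) ^ 2 + max (η * b ^ 2 - 1 / 2) 0) := by
  have hmem : ∀ i ∈ s, v i ∈ Set.Icc (-b) b := fun i hi => abs_le.mp (hv i hi)
  have hmean : ∑ i ∈ s, α i * v i ∈ Set.Icc (-b) b :=
    (convex_Icc (-b) b).sum_mem hα hα_sum hmem
  have hmean_sq : (∑ i ∈ s, α i * v i) ^ 2 ≤ b ^ 2 := sq_le_sq' hmean.1 hmean.2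
  obtain ⟨μ, hμ, hμη, hμb, hgap⟩ := exists_exponent_le_with_sq_gap hη b
  have hjensen := (concaveOn_exp_neg_mul_sq_s9 hμ hμb).le_map_sum hα hα_sum hmem
  simp only [smul_eq_mul] at hjensen
  calc ∑ i ∈ s, α i * exp (-η * v i ^ 2)
      ≤ ∑ i ∈ s, α i * exp (-μ * v i ^ 2) := by
        refine sum_le_sum fun i hi => mul_le_mul_of_nonneg_left (exp_le_exp.mpr ?_) (hα i hi)
        nlinarith [sq_nonneg (v i)]
    _ ≤ exp (-μ * (∑ i ∈ s, α i * v i) ^ 2) := hjensen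
    _ ≤ exp (-η * (∑ i ∈ s, α i * v i) ^ 2 + max (η * b ^ 2 - 1 / 2) 0) := by
        gcongr
        nlinarith [mul_le_mul_of_nonneg_left hmean_sq (sub_nonneg.mpr hμη)]

/-- Per-step inequality for exponentially weighted aggregation with the quadratic
loss: with weights `w i t ∝ exp(-η ∑_{s<t} (xh i s - x s)²)`, for each `t`,
`(agg t - x t)² ≤ -(1/η) log(∑ i, w i t exp(-η (xh i t - x t)²)) + (y t² - 1/(2η))₊`
where `agg t = ∑ i, w i t * xh i t` and `y t = |x t| + max_i |xh i t|`. -/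
theorem aggregation_quadratic_loss_per_step
    (N : ℕ) (hN : 0 < N) (η : ℝ) (hη : 0 < η)
    (x : ℕ → ℝ) (xh : Fin N → ℕ → ℝ)
    (w : Fin N → ℕ → ℝ)
    (hw : ∀ i t, w i t =
      Real.exp (-η * ∑ s ∈ range t, (xh i s - x s) ^ 2) /
        ∑ k : Fin N, Real.exp (-η * ∑ s ∈ range t, (xh k s - x s) ^ 2))
    (agg : ℕ → ℝ) (hagg : ∀ t, agg t = ∑ i : Fin N, w i t * xh i t)
    (y : ℕ → ℝ) (hy : ∀ t, y t = |x t| + ⨆ i : Fin N, |xh i t|)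
    (t : ℕ) :
    (agg t - x t) ^ 2 ≤
      -(1 / η) * Real.log (∑ i : Fin N, w i t * Real.exp (-η * (xh i t - x t) ^ 2)) +
        max ((y t) ^ 2 - 1 / (2 * η)) 0 := by
  have : Nonempty (Fin N) := Fin.pos_iff_nonempty.mp hN
  have hden : 0 < ∑ k : Fin N, exp (-η * ∑ s ∈ range t, (xh k s - x s) ^ 2) :=
    sum_pos (fun k _ => exp_pos _) univ_nonempty
  have hw_pos : ∀ i, 0 < w i t := fun i => by rw [hw]; exact div_pos (exp_pos _) hden
  have hw_sum : ∑ i, w i t = 1 := by simp_rw [hw, ← sum_div, div_self hden.ne']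
  have hresidual : agg t - x t = ∑ i, w i t * (xh i t - x t) := by
    simp_rw [hagg, mul_sub, sum_sub_distrib, ← sum_mul, hw_sum, one_mul]
  have hbound : ∀ i ∈ univ, |xh i t - x t| ≤ y t := fun i _ => by
    have := le_ciSup (Finite.bddAbove_range fun j => |xh j t|) i
    rw [hy]; linarith [abs_sub (xh i t) (x t)]
  have hkey := sum_mul_exp_neg_mul_sq_le_s9 univ hη.le (fun i _ => (hw_pos i).le) hw_sum hbound
  rw [← hresidual, ← log_le_iff_le_exp (sum_pos (fun i _ => mul_pos (hw_pos i) (exp_pos _))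
    univ_nonempty)] at hkey
  have hgap : max (y t ^ 2 - 1 / (2 * η)) 0 = max (η * y t ^ 2 - 1 / 2) 0 / η := by
    rw [← max_div_div_right hη.le, zero_div]; congr 1; field_simp
  rw [hgap, show ∀ L M : ℝ, -(1 / η) * L + M / η = (-L + M) / η from fun L M => by ring,
    le_div_iff₀ hη]
  linarith
end
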